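/- arXiv:0909.4453 — 2 statements merged into one kernel-verified Lean document; each statement's English description precedes it below -/
import Mathlib

section
/- Let d ≥ 2 and k ≥ 2. There exist k pairwise complementary partitions of a set with d² elements if and only if there exist k − 2 pairwise orthogonal Latin squares of order d. (Equivalently, there are k mutually complementary classical structures on a set with d² elements in Rel if and only if there exist k − 2 mutually orthogonal d × d Latin squares.) -/
/-- `π` is a partition of `X`: a collection of nonempty pairwise disjoint subsets of `X`
whose union is all of `X`. -/
def IsPartition {X : Type*} (π : Set (Set X)) : Prop :=
  (∀ S ∈ π, S.Nonempty) ∧ (∀ S ∈ π, ∀ T ∈ π, S ≠ T → Disjoint S T) ∧ ⋃₀ π = Set.univ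

/-- Two partitions are complementary if every part of one meets every part of the other
in exactly one element. -/
def Complementary {X : Type*} (π τ : Set (Set X)) : Prop :=
  ∀ S ∈ π, ∀ T ∈ τ, ∃! x, x ∈ S ∩ T

/-- A Latin square of order `d`: every row and every column is a bijection. -/
def IsLatinSquare {d : ℕ} (L : Fin d → Fin d → Fin d) : Prop :=
  (∀ i, Function.Bijective fun j => L i j) ∧ (∀ j, Function.Bijective fun i => L i j)

/-- Two Latin squares of order `d` are orthogonal if the map
`(i, j) ↦ (L i j, L' i j)` is injective. -/
def OrthogonalLS {d : ℕ} (L L' : Fin d → Fin d → Fin d) : Prop :=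
  Function.Injective fun p : Fin d × Fin d => (L p.1 p.2, L' p.1 p.2)

/-!
For pairwise complementary partitions `πᵢ` of `X`, the maps `x ↦ (part of πᵢ containing x)` are
pairwise jointly bijective, i.e. they form an orthogonal array of strength two and index one.
When `k ≥ 3`, the relations `|πᵢ| |πⱼ| = |X|` for three distinct indices force `|πᵢ|² = |X|`, so
every partition has exactly `d` parts. The first two columns then identify `X` with
`Fin d × Fin d` (row and column of a square), and each further column is a Latin square;
orthogonality of two columns is orthogonality of the squares. Read backwards, `k - 2` MOLS
together with the row and column coordinates give `k` pairwise complementary fibre partitions.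
-/

open Function

namespace IsPartition

variable {X : Type*} {π : Set (Set X)}

theorem exists_mem (hπ : IsPartition π) (x : X) : ∃ S ∈ π, x ∈ S :=
  Set.sUnion_eq_univ_iff.mp hπ.2.2 x

noncomputable def partOf (hπ : IsPartition π) (x : X) : π :=
  ⟨_, (hπ.exists_mem x).choose_spec.1⟩

theorem mem_partOf (hπ : IsPartition π) (x : X) : x ∈ (hπ.partOf x : Set X) :=
  (hπ.exists_mem x).choose_spec.2

theorem partOf_eq_of_mem (hπ : IsPartition π) {x : X} {S : Set X} (hS : S ∈ π) (hx : x ∈ S) :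
    (hπ.partOf x : Set X) = S := by
  by_contra h
  exact Set.disjoint_left.mp (hπ.2.1 _ (hπ.partOf x).2 S hS h) (hπ.mem_partOf x) hx

theorem partOf_surjective (hπ : IsPartition π) : Surjective hπ.partOf := by
  rintro ⟨S, hS⟩
  obtain ⟨x, hx⟩ := hπ.1 S hS
  exact ⟨x, Subtype.ext (hπ.partOf_eq_of_mem hS hx)⟩

end IsPartition

theorem Complementary.bijective_partOf {X : Type*} {π τ : Set (Set X)} (h : Complementary π τ)
    (hπ : IsPartition π) (hτ : IsPartition τ) :
    Bijective fun x => (hπ.partOf x, hτ.partOf x) := by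
  constructor
  · intro x y hxy
    obtain ⟨hπxy, hτxy⟩ := Prod.mk.inj hxy
    obtain ⟨z, -, hz⟩ := h _ (hπ.partOf x).2 _ (hτ.partOf x).2
    have hx : x ∈ (hπ.partOf x : Set X) ∩ hτ.partOf x := ⟨hπ.mem_partOf x, hτ.mem_partOf x⟩
    have hy : y ∈ (hπ.partOf x : Set X) ∩ hτ.partOf x := by
      rw [hπxy, hτxy]
      exact ⟨hπ.mem_partOf y, hτ.mem_partOf y⟩
    exact (hz x hx).trans (hz y hy).symm
  · rintro ⟨⟨S, hS⟩, ⟨T, hT⟩⟩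
    obtain ⟨x, ⟨hxS, hxT⟩, -⟩ := h S hS T hT
    exact ⟨x, Prod.ext (Subtype.ext (hπ.partOf_eq_of_mem hS hxS))
      (Subtype.ext (hτ.partOf_eq_of_mem hT hxT))⟩

def fibers {X α : Type*} (f : X → α) : Set (Set X) :=
  Set.range fun x => f ⁻¹' {f x}

theorem isPartition_fibers {X α : Type*} (f : X → α) : IsPartition (fibers f) := by
  refine ⟨?_, ?_, Set.sUnion_eq_univ_iff.mpr fun x => ⟨_, ⟨x, rfl⟩, rfl⟩⟩
  · rintro _ ⟨x, rfl⟩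
    exact ⟨x, rfl⟩
  · rintro _ ⟨x, rfl⟩ _ ⟨y, rfl⟩ hne
    refine Set.disjoint_left.mpr fun z (hzx : f z = f x) (hzy : f z = f y) => hne ?_
    change f ⁻¹' {f x} = f ⁻¹' {f y}
    rw [← hzx, ← hzy]

theorem complementary_fibers {X α β : Type*} {f : X → α} {g : X → β}
    (h : Bijective fun x => (f x, g x)) : Complementary (fibers f) (fibers g) := by
  rintro _ ⟨x, rfl⟩ _ ⟨y, rfl⟩
  simpa [Prod.ext_iff] using h.existsUnique (f x, g y)

theorem bijective_pair_swap {X α β : Type*} {f : X → α} {g : X → β}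
    (h : Bijective fun x => (f x, g x)) : Bijective fun x => (g x, f x) :=
  (Equiv.prodComm _ _).bijective.comp h

/-- The columns of an orthogonal array of strength two and index one, with rows indexed by `X`. -/
def IsOrthogonalArray {ι X α : Type*} (F : ι → X → α) : Prop :=
  Pairwise fun i j => Bijective fun x => (F i x, F j x)

namespace IsOrthogonalArray

variable {ι κ X Y α : Type*} {F : ι → X → α}

theorem comp_injective (hF : IsOrthogonalArray F) {σ : κ → ι} (hσ : Injective σ) :
    IsOrthogonalArray (F ∘ σ) :=
  hF.comp_of_injective hσ

theorem comp_right (hF : IsOrthogonalArray F) {e : Y → X} (he : Bijective e) :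
    IsOrthogonalArray fun i => F i ∘ e :=
  fun _ _ hij => (hF hij).comp he

end IsOrthogonalArray

theorem card_sq_eq_of_bijective_pairs {X α β γ : Type*} [Finite X] {f : X → α} {g : X → β}
    {h : X → γ} (hf : Surjective f) (hfg : Bijective fun x => (f x, g x))
    (hfh : Bijective fun x => (f x, h x)) (hgh : Bijective fun x => (g x, h x)) :
    Nat.card α ^ 2 = Nat.card X := by
  have hab := Nat.card_eq_of_bijective _ hfg
  have hac := Nat.card_eq_of_bijective _ hfh
  have hbc := Nat.card_eq_of_bijective _ hgh
  rw [Nat.card_prod] at hab hac hbc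
  rcases Nat.eq_zero_or_pos (Nat.card X) with hX | hX
  · have hα : Nat.card α = 0 := Nat.le_zero.mp (hX ▸ Nat.card_le_card_of_surjective f hf)
    rw [hX, hα, zero_pow two_ne_zero]
  · refine Nat.eq_of_mul_eq_mul_right hX ?_
    calc Nat.card α ^ 2 * Nat.card X
        = (Nat.card α * Nat.card β) * (Nat.card α * Nat.card γ) := by rw [hbc]; ring
      _ = Nat.card X * Nat.card X := by rw [← hab, ← hac]

theorem exists_isOrthogonalArray_of_complementary {ι X : Type*} [Fintype ι]
    (hι : 3 ≤ Fintype.card ι) [Finite X] {d : ℕ} (hX : Nat.card X = d ^ 2)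
    {π : ι → Set (Set X)} (hπ : ∀ i, IsPartition (π i))
    (hc : Pairwise fun i j => Complementary (π i) (π j)) :
    ∃ F : ι → X → Fin d, IsOrthogonalArray F := by
  have hP : Pairwise fun i j => Bijective fun x => ((hπ i).partOf x, (hπ j).partOf x) :=
    fun i j hij => (hc hij).bijective_partOf (hπ i) (hπ j)
  have hcard (i : ι) : Nat.card (π i) = d := by
    obtain ⟨j, l, hj, hl, hjl⟩ : ∃ j l, j ≠ i ∧ l ≠ i ∧ j ≠ l := by
      classical
      have : 1 < ({i}ᶜ : Finset ι).card := by
        rw [Finset.card_compl, Finset.card_singleton]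
        omega
      simpa [Finset.one_lt_card_iff] using this
    refine Nat.pow_left_injective two_ne_zero ?_
    simp only [card_sq_eq_of_bijective_pairs (hπ i).partOf_surjective (hP hj.symm) (hP hl.symm)
      (hP hjl), hX]
  have (i : ι) : Finite (π i) := Finite.of_surjective _ (hπ i).partOf_surjective
  let e (i : ι) : π i ≃ Fin d := Finite.equivFinOfCardEq (hcard i)
  exact ⟨fun i x => e i ((hπ i).partOf x), fun i j hij =>
    ((e i).prodCongr (e j)).bijective.comp (hP hij)⟩

theorem pairwise_sum_iff_of_symmetric {α β : Type*} {r : α ⊕ β → α ⊕ β → Prop}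
    (hr : ∀ ⦃a b⦄, r a b → r b a) :
    Pairwise r ↔ Pairwise (r on Sum.inl) ∧ (∀ a b, r (.inl a) (.inr b)) ∧
      Pairwise (r on Sum.inr) := by
  refine ⟨fun h => ⟨h.comp_of_injective Sum.inl_injective, fun a b => h Sum.inl_ne_inr,
    h.comp_of_injective Sum.inr_injective⟩, ?_⟩
  rintro ⟨hl, hlr, hrr⟩ (a | b) (a' | b') hne
  · exact hl (ne_of_apply_ne _ hne)
  · exact hlr a b'
  · exact hr (hlr a' b)
  · exact hrr (ne_of_apply_ne _ hne)

theorem bijective_shear_iff {α β γ : Type*} {f : α → β → γ} :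
    (Bijective fun p : α × β => (p.1, f p.1 p.2)) ↔ ∀ a, Bijective (f a) := by
  constructor
  · intro h a
    refine ⟨fun b b' hb => (Prod.mk.inj (h.1 (a₁ := (a, b)) (a₂ := (a, b')) ?_)).2, fun c => ?_⟩
    · simp only [hb]
    · obtain ⟨⟨a', b⟩, hab⟩ := h.2 (a, c)
      obtain ⟨rfl, hb⟩ := Prod.mk.inj hab
      exact ⟨b, hb⟩
  · intro h
    exact (Equiv.prodShear (Equiv.refl α) fun a => Equiv.ofBijective _ (h a)).bijective

theorem isLatinSquare_iff {d : ℕ} {L : Fin d → Fin d → Fin d} :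
    IsLatinSquare L ↔ (Bijective fun p : Fin d × Fin d => (p.1, L p.1 p.2)) ∧
      Bijective fun p : Fin d × Fin d => (p.2, L p.1 p.2) := by
  rw [bijective_shear_iff, ← Bijective.of_comp_iff _ Prod.swap_bijective]
  exact Iff.and Iff.rfl bijective_shear_iff.symm

theorem orthogonalLS_iff_bijective {d : ℕ} {L L' : Fin d → Fin d → Fin d} :
    OrthogonalLS L L' ↔ Bijective fun p : Fin d × Fin d => (L p.1 p.2, L' p.1 p.2) :=
  Finite.injective_iff_bijective

def orthogonalArrayOfSquares {κ : Type*} {d : ℕ} (L : κ → Fin d → Fin d → Fin d) :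
    Fin 2 ⊕ κ → Fin d × Fin d → Fin d :=
  Sum.elim ![Prod.fst, Prod.snd] fun m p => L m p.1 p.2

theorem isOrthogonalArray_orthogonalArrayOfSquares_iff {κ : Type*} {d : ℕ}
    {L : κ → Fin d → Fin d → Fin d} :
    IsOrthogonalArray (orthogonalArrayOfSquares L) ↔
      (∀ m, IsLatinSquare (L m)) ∧ Pairwise fun m m' => OrthogonalLS (L m) (L m') := by
  rw [IsOrthogonalArray, pairwise_sum_iff_of_symmetric fun _ _ => bijective_pair_swap]
  have hindex : Pairwise fun a b : Fin 2 => Bijective fun p : Fin d × Fin d =>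
      (![Prod.fst, Prod.snd] a p, ![Prod.fst, Prod.snd] b p) := by
    intro a b hab
    fin_cases a <;> fin_cases b
    all_goals first | exact absurd rfl hab | exact bijective_id | exact Prod.swap_bijective
  simp only [orthogonalArrayOfSquares, Sum.elim_inl, Sum.elim_inr, Fin.forall_fin_two,
    Matrix.cons_val_zero, Matrix.cons_val_one, isLatinSquare_iff, orthogonalLS_iff_bijective,
    forall_and]
  exact and_iff_right hindex

theorem exists_mols_of_isOrthogonalArray {κ X : Type*} {d : ℕ} {F : Fin 2 ⊕ κ → X → Fin d}
    (hF : IsOrthogonalArray F) :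
    ∃ L : κ → Fin d → Fin d → Fin d,
      (∀ m, IsLatinSquare (L m)) ∧ Pairwise fun m m' => OrthogonalLS (L m) (L m') := by
  let Φ : X ≃ Fin d × Fin d := Equiv.ofBijective _ (hF (i := .inl 0) (j := .inl 1) (by simp))
  have hΦ : (fun i => F i ∘ Φ.symm) =
      orthogonalArrayOfSquares fun m a b => F (.inr m) (Φ.symm (a, b)) := by
    funext i p
    have hp : (F (.inl 0) (Φ.symm p), F (.inl 1) (Φ.symm p)) = p := Φ.apply_symm_apply p
    rcases i with a | m
    · fin_cases a
      · exact congrArg Prod.fst hp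
      · exact congrArg Prod.snd hp
    · rfl
  exact ⟨_, isOrthogonalArray_orthogonalArrayOfSquares_iff.mp
    (hΦ ▸ hF.comp_right Φ.symm.bijective)⟩

theorem mutually_complementary_partitions_iff_mols_general {d k : ℕ} (hk : 2 ≤ k)
    {X : Type*} [Fintype X] (hX : Fintype.card X = d ^ 2) :
    (∃ π : Fin k → Set (Set X),
        (∀ i, IsPartition (π i)) ∧ ∀ i j, i ≠ j → Complementary (π i) (π j)) ↔
    (∃ L : Fin (k - 2) → Fin d → Fin d → Fin d,
        (∀ i, IsLatinSquare (L i)) ∧ ∀ i j, i ≠ j → OrthogonalLS (L i) (L j)) := by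
  let σ : Fin 2 ⊕ Fin (k - 2) ≃ Fin k := finSumFinEquiv.trans (finCongr (by omega))
  constructor
  · rintro ⟨π, hπ, hc⟩
    rcases Nat.lt_or_ge k 3 with hk3 | hk3
    · have : IsEmpty (Fin (k - 2)) := by rw [show k - 2 = 0 by omega]; exact Fin.isEmpty'
      exact ⟨isEmptyElim, isEmptyElim, isEmptyElim⟩
    · obtain ⟨F, hF⟩ := exists_isOrthogonalArray_of_complementary (by simpa using hk3)
        (Nat.card_eq_fintype_card.trans hX) hπ hc
      exact exists_mols_of_isOrthogonalArray (hF.comp_injective σ.injective)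
  · rintro ⟨L, hL, hLL⟩
    let e : X ≃ Fin d × Fin d := Fintype.equivOfCardEq (by simp [hX, sq])
    have hF := ((isOrthogonalArray_orthogonalArrayOfSquares_iff.mpr ⟨hL, hLL⟩).comp_injective
      σ.symm.injective).comp_right e.bijective
    exact ⟨fun i => fibers _, fun i => isPartition_fibers _,
      fun i j hij => complementary_fibers (hF hij)⟩

/-- For `d ≥ 2` and `k ≥ 2`, there exist `k` pairwise complementary partitions of a set
with `d²` elements if and only if there exist `k - 2` mutually orthogonal Latin squares
of order `d`.  Equivalently, there are `k` mutually complementary classical structures on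
a set with `d²` elements in `Rel` iff there exist `k - 2` MOLS of order `d`. -/
theorem mutually_complementary_partitions_iff_mols {d k : ℕ} (hd : 2 ≤ d) (hk : 2 ≤ k)
    {X : Type*} [Fintype X] (hX : Fintype.card X = d ^ 2) :
    (∃ π : Fin k → Set (Set X),
        (∀ i, IsPartition (π i)) ∧ ∀ i j, i ≠ j → Complementary (π i) (π j)) ↔
    (∃ L : Fin (k - 2) → Fin d → Fin d → Fin d,
        (∀ i, IsLatinSquare (L i)) ∧ ∀ i j, i ≠ j → OrthogonalLS (L i) (L j)) :=
  mutually_complementary_partitions_iff_mols_general hk hX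
end

section
/- Let d ≥ 2 and suppose there exist k pairwise complementary partitions of a set with d² elements. Then there exist k orthonormal bases of the complex inner product space ℂ^(d²) (EuclideanSpace ℂ (Fin (d²))) that are pairwise mutually unbiased. (If there are k mutually complementary classical structures on d² elements in Rel, then there are k mutually unbiased bases in ℂ^(d²).) -/
/-!
A partition `π` of a finite set `X` yields an orthonormal basis of `ℂ^X`: on each part `S`
take the discrete Fourier basis of `ℂ^S`, all of whose entries have modulus `|S|^(-1/2)`,
and extend by zero. If `π` and `τ` are complementary, every part of `π` has `|τ|` elements,
every part of `τ` has `|π|` elements, and `|π| |τ| = |X|`. A basis vector of `π` supported on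
`S` and one of `τ` supported on `T` overlap only at the single point of `S ∩ T`, so the squared
modulus of their inner product is `(|S| |T|)⁻¹ = (|τ| |π|)⁻¹ = |X|⁻¹`.
-/

theorem EuclideanSpace.exists_orthonormalBasis_norm_sq_apply (ι : Type*) [Fintype ι] :
    ∃ b : OrthonormalBasis ι ℂ (EuclideanSpace ℂ ι),
      ∀ i j, ‖b i j‖ ^ 2 = (Fintype.card ι : ℝ)⁻¹ := by
  classical
  set N := Fintype.card ι
  rcases isEmpty_or_nonempty ι with hι | hι
  · exact ⟨EuclideanSpace.basisFun ι ℂ, fun i => isEmptyElim i⟩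
  have : NeZero N := ⟨Fintype.card_ne_zero⟩
  let e : ι ≃ ZMod N := Fintype.equivOfCardEq (ZMod.card N).symm
  let ψ : AddChar (ZMod N) ℂ := ZMod.stdAddChar
  let v : ι → EuclideanSpace ℂ ι := fun i =>
    WithLp.toLp 2 fun j => ((√N : ℝ) : ℂ)⁻¹ * ψ (e i * e j)
  have hN : ((√N : ℝ) : ℂ)⁻¹ * ((√N : ℝ) : ℂ)⁻¹ = (N : ℂ)⁻¹ := by
    rw [← mul_inv, ← Complex.ofReal_mul, Real.mul_self_sqrt N.cast_nonneg, Complex.ofReal_natCast]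
  have hv : Orthonormal ℂ v := by
    rw [orthonormal_iff_ite]
    intro i i'
    calc inner ℂ (v i) (v i') = (N : ℂ)⁻¹ * ∑ z : ZMod N, ψ (z * (e i' - e i)) := by
          simp only [v, PiLp.inner_apply, RCLike.inner_apply, Finset.mul_sum]
          rw [← e.sum_comp]
          refine Fintype.sum_congr _ _ fun j => ?_
          rw [map_mul (starRingEnd ℂ), map_inv₀, Complex.conj_ofReal, ← AddChar.map_neg_eq_conj,
            mul_mul_mul_comm, ← AddChar.map_add_eq_mul, hN]
          ring_nf
      _ = if i = i' then 1 else 0 := by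
          rw [AddChar.sum_mulShift _ (ZMod.isPrimitive_stdAddChar N)]
          by_cases h : i = i'
          · simp [h, ZMod.card, N]
          · simp [h, sub_eq_zero, e.injective.ne (Ne.symm h)]
  refine ⟨OrthonormalBasis.mk hv (hv.linearIndependent.span_eq_top_of_card_eq_finrank' ?_).ge,
    fun i j => ?_⟩
  · simp
  · simp [v, AddChar.norm_apply]

section Partitions

variable {X : Type*} {π τ : Set (Set X)}

namespace IsPartition

theorem existsUnique_mem (hπ : IsPartition π) (x : X) : ∃! S : π, x ∈ (S : Set X) := by
  obtain ⟨S, hS, hxS⟩ := Set.mem_sUnion.1 (hπ.2.2 ▸ Set.mem_univ x)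
  refine ⟨⟨S, hS⟩, hxS, fun T hxT => Subtype.ext ?_⟩
  by_contra hTS
  exact Set.disjoint_left.1 (hπ.2.1 T T.2 S hS hTS) hxT hxS

noncomputable def part (hπ : IsPartition π) (x : X) : π :=
  (hπ.existsUnique_mem x).choose

theorem part_eq_iff (hπ : IsPartition π) {x : X} {S : π} : hπ.part x = S ↔ x ∈ (S : Set X) :=
  ⟨fun h => h ▸ (hπ.existsUnique_mem x).choose_spec.1,
    fun h => (hπ.existsUnique_mem x).unique (hπ.existsUnique_mem x).choose_spec.1 h⟩

noncomputable def sigmaEquiv (hπ : IsPartition π) : (Σ S : π, (S : Set X)) ≃ X :=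
  Set.sigmaEquiv _ hπ.existsUnique_mem

theorem sigmaEquiv_symm_apply (hπ : IsPartition π) (x : X) :
    hπ.sigmaEquiv.symm x = ⟨hπ.part x, x, hπ.part_eq_iff.1 rfl⟩ := rfl

end IsPartition

namespace Complementary

theorem symm (hc : Complementary π τ) : Complementary τ π := fun T hT S hS => by
  simpa only [Set.inter_comm] using hc S hS T hT

theorem card_eq (hτ : IsPartition τ) (hc : Complementary π τ) {S : Set X} (hS : S ∈ π) :
    Nat.card S = Nat.card τ := by
  refine Nat.card_eq_of_bijective (fun x : S => hτ.part x) ⟨fun x y hxy => ?_, fun T => ?_⟩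
  · have hx : (x : X) ∈ (hτ.part x : Set X) := hτ.part_eq_iff.1 rfl
    have hy : (y : X) ∈ (hτ.part x : Set X) := hτ.part_eq_iff.1 hxy.symm
    exact Subtype.ext ((hc S hS _ (hτ.part x).2).unique ⟨x.2, hx⟩ ⟨y.2, hy⟩)
  · obtain ⟨x, ⟨hxS, hxT⟩, -⟩ := hc S hS T T.2
    exact ⟨⟨x, hxS⟩, hτ.part_eq_iff.2 hxT⟩

theorem card_mul_card [Finite X] (hπ : IsPartition π) (hτ : IsPartition τ)
    (hc : Complementary π τ) : Nat.card π * Nat.card τ = Nat.card X := by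
  have := Fintype.ofFinite π
  rw [← Nat.card_congr hπ.sigmaEquiv, Nat.card_sigma,
    Finset.sum_congr rfl fun S _ => hc.card_eq hτ S.2, Finset.sum_const, smul_eq_mul,
    Finset.card_univ, Nat.card_eq_fintype_card]

end Complementary

open Classical in
theorem IsPartition.exists_orthonormalBasis_norm_sq_apply [Fintype X] (hπ : IsPartition π) :
    ∃ B : OrthonormalBasis (Σ S : π, (S : Set X)) ℂ (EuclideanSpace ℂ X),
      ∀ p x, ‖B p x‖ ^ 2 = if x ∈ (p.1 : Set X) then (Nat.card p.1 : ℝ)⁻¹ else 0 := by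
  choose b hb using fun S : π => EuclideanSpace.exists_orthonormalBasis_norm_sq_apply S
  let curry := LinearIsometryEquiv.piLpCurry ℂ 2 fun (S : π) (_ : (S : Set X)) => ℂ
  refine ⟨((Pi.orthonormalBasis b).map curry.symm).map
    (LinearIsometryEquiv.piLpCongrLeft 2 ℂ ℂ hπ.sigmaEquiv), ?_⟩
  rintro ⟨S, a⟩ x
  simp only [curry, OrthonormalBasis.map_apply, Pi.orthonormalBasis_apply,
    LinearIsometryEquiv.piLpCongrLeft_apply, Equiv.piCongrLeft'_apply,
    hπ.sigmaEquiv_symm_apply, LinearIsometryEquiv.piLpCurry_symm_apply,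
    Sigma.uncurry]
  split_ifs with hx
  · obtain rfl := hπ.part_eq_iff.2 hx
    rw [PiLp.single_eq_same, hb, Nat.card_eq_fintype_card]
  · rw [PiLp.single_eq_of_ne (p := 2) (mt hπ.part_eq_iff.1 hx), PiLp.zero_apply, norm_zero,
      sq, zero_mul]

open Classical in
theorem Complementary.norm_inner_sq_eq [Fintype X] (hπ : IsPartition π) (hτ : IsPartition τ)
    (hc : Complementary π τ) {S T : Set X} (hS : S ∈ π) (hT : T ∈ τ) {u w : EuclideanSpace ℂ X}
    (hu : ∀ x, ‖u x‖ ^ 2 = if x ∈ S then (Nat.card S : ℝ)⁻¹ else 0)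
    (hw : ∀ x, ‖w x‖ ^ 2 = if x ∈ T then (Nat.card T : ℝ)⁻¹ else 0) :
    ‖inner ℂ u w‖ ^ 2 = (Nat.card X : ℝ)⁻¹ := by
  obtain ⟨x₀, hx₀, hunique⟩ := hc S hS T hT
  have hu0 : ∀ x ∉ S, u x = 0 := fun x hx => by simpa [hx] using hu x
  have hw0 : ∀ x ∉ T, w x = 0 := fun x hx => by simpa [hx] using hw x
  have hinner : inner ℂ u w = inner ℂ (u x₀) (w x₀) := by
    refine Finset.sum_eq_single x₀ (fun x _ hx => ?_) (by simp)
    by_cases hxS : x ∈ S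
    · rw [hw0 x fun hxT => hx (hunique x ⟨hxS, hxT⟩), inner_zero_right]
    · rw [hu0 x hxS, inner_zero_left]
  rw [hinner, RCLike.inner_apply, norm_mul, RCLike.norm_conj, mul_pow, hu, hw, if_pos hx₀.1,
    if_pos hx₀.2, hc.card_eq hτ hS, hc.symm.card_eq hπ hT, ← mul_inv, ← Nat.cast_mul,
    hc.card_mul_card hπ hτ]

end Partitions

theorem mubs_of_mutually_complementary_partitions_general {d k : ℕ}
    {X : Type*} [Fintype X] (hX : Fintype.card X = d ^ 2)
    (hπ : ∃ π : Fin k → Set (Set X),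
        (∀ i, IsPartition (π i)) ∧ ∀ i j, i ≠ j → Complementary (π i) (π j)) :
    ∃ B : Fin k → OrthonormalBasis (Fin (d ^ 2)) ℂ (EuclideanSpace ℂ (Fin (d ^ 2))),
      ∀ i j, i ≠ j → ∀ a b : Fin (d ^ 2),
        ‖(inner ℂ (B i a) (B j b) : ℂ)‖ ^ 2 = 1 / (d ^ 2 : ℝ) := by
  classical
  obtain ⟨π, hpart, hcompl⟩ := hπ
  let e : X ≃ Fin (d ^ 2) := Fintype.equivFinOfCardEq hX
  choose B hB using fun i => (hpart i).exists_orthonormalBasis_norm_sq_apply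
  refine ⟨fun i => ((B i).reindex ((hpart i).sigmaEquiv.trans e)).map
    (LinearIsometryEquiv.piLpCongrLeft 2 ℂ ℂ e), fun i j hij a b => ?_⟩
  rw [OrthonormalBasis.map_apply, OrthonormalBasis.map_apply, LinearIsometryEquiv.inner_map_map,
    OrthonormalBasis.reindex_apply, OrthonormalBasis.reindex_apply,
    (hcompl i j hij).norm_inner_sq_eq (hpart i) (hpart j) (Subtype.prop _) (Subtype.prop _)
      (hB i _) (hB j _),
    Nat.card_eq_fintype_card, hX, one_div, Nat.cast_pow]

/-- If there are `k` mutually complementary classical structures on `d²` elements in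
`Rel` (i.e. `k` pairwise complementary partitions of a set with `d²` elements), then
there are `k` pairwise mutually unbiased orthonormal bases of `ℂ^(d²)`: orthonormal bases
`B i` with `|⟨B i a, B j b⟩|² = 1 / d²` for all `i ≠ j` and all `a`, `b`. -/
theorem mubs_of_mutually_complementary_partitions {d k : ℕ} (hd : 2 ≤ d)
    {X : Type*} [Fintype X] (hX : Fintype.card X = d ^ 2)
    (hπ : ∃ π : Fin k → Set (Set X),
        (∀ i, IsPartition (π i)) ∧ ∀ i j, i ≠ j → Complementary (π i) (π j)) :
    ∃ B : Fin k → OrthonormalBasis (Fin (d ^ 2)) ℂ (EuclideanSpace ℂ (Fin (d ^ 2))),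
      ∀ i j, i ≠ j → ∀ a b : Fin (d ^ 2),
        ‖(inner ℂ (B i a) (B j b) : ℂ)‖ ^ 2 = 1 / (d ^ 2 : ℝ) :=
  mubs_of_mutually_complementary_partitions_general hX hπ
end
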